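/- A linear constant-coefficient system y'' = A·y' + B·y (A, B constant n×n complex matrices) has vanishing Fels torsion if and only if B + (1/4)A² is a scalar multiple of the identity. -/

import Mathlib

/-! For a linear system the derivatives `∂fᴵ/∂ẏᴶ = Aᴵ_J` and `∂fᴵ/∂yᴶ = Bᴵ_J` are constant, so the
`d/dx` term of `φ` drops out and `φ = -(B + A²/4)`. The Fels torsion is then minus the trace-free
part of `B + A²/4`, which vanishes exactly when that matrix is scalar. -/

open Finset in
/-- partial derivative in `x` -/
noncomputable def Px {n : ℕ} (g : ℂ → (Fin n → ℂ) → (Fin n → ℂ) → ℂ)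
    (x : ℂ) (v w : Fin n → ℂ) : ℂ :=
  deriv (fun t => g t v w) x

/-- partial derivative in `yᴶ` -/
noncomputable def Py {n : ℕ} (J : Fin n) (g : ℂ → (Fin n → ℂ) → (Fin n → ℂ) → ℂ)
    (x : ℂ) (v w : Fin n → ℂ) : ℂ :=
  deriv (fun t => g x (Function.update v J t) w) (v J)

/-- partial derivative in `ẏᴶ` -/
noncomputable def Pyd {n : ℕ} (J : Fin n) (g : ℂ → (Fin n → ℂ) → (Fin n → ℂ) → ℂ)
    (x : ℂ) (v w : Fin n → ℂ) : ℂ :=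
  deriv (fun t => g x v (Function.update w J t)) (w J)

/-- total derivative d/dx along solutions of the system y'' = f(x,y,ẏ) -/
noncomputable def Dx {n : ℕ} (f : ℂ → (Fin n → ℂ) → (Fin n → ℂ) → Fin n → ℂ)
    (g : ℂ → (Fin n → ℂ) → (Fin n → ℂ) → ℂ)
    (x : ℂ) (v w : Fin n → ℂ) : ℂ :=
  Px g x v w + ∑ K, w K * Py K g x v w + ∑ K, f x v w K * Pyd K g x v w

/-- φᴵ_J = (1/2)(d/dx)(∂fᴵ/∂ẏᴶ) − ∂fᴵ/∂yᴶ − (1/4)∑_K (∂fᴵ/∂ẏᴷ)(∂fᴷ/∂ẏᴶ) -/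
noncomputable def phi {n : ℕ} (f : ℂ → (Fin n → ℂ) → (Fin n → ℂ) → Fin n → ℂ)
    (I J : Fin n) (x : ℂ) (v w : Fin n → ℂ) : ℂ :=
  (1 / 2) * Dx f (fun a b c => Pyd J (fun a b c => f a b c I) a b c) x v w
    - Py J (fun a b c => f a b c I) x v w
    - (1 / 4) * ∑ K, Pyd K (fun a b c => f a b c I) x v w
        * Pyd J (fun a b c => f a b c K) x v w

/-- the Fels torsion Φᴵ_J = φᴵ_J − (1/n)·φᴷ_K·δᴵ_J -/
noncomputable def fels {n : ℕ} (f : ℂ → (Fin n → ℂ) → (Fin n → ℂ) → Fin n → ℂ)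
    (I J : Fin n) (x : ℂ) (v w : Fin n → ℂ) : ℂ :=
  phi f I J x v w - (1 / (n : ℂ)) * (∑ K, phi f K K x v w)
    * (if I = J then 1 else 0)

theorem hasDerivAt_sum_mul_update {𝕜 ι : Type*} [NontriviallyNormedField 𝕜] [Fintype ι]
    [DecidableEq ι] (c w : ι → 𝕜) (J : ι) (t : 𝕜) :
    HasDerivAt (fun s => ∑ K, c K * Function.update w J s K) (c J) t := by
  have hcoord K := (hasDerivAt_pi.1 (hasDerivAt_update w J t) K).const_mul (c K)
  simpa [Pi.single_apply] using HasDerivAt.fun_sum (u := Finset.univ) fun K _ => hcoord K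

theorem Matrix.exists_eq_smul_one_iff {𝕜 ι : Type*} [Field 𝕜] [CharZero 𝕜] [Fintype ι]
    [DecidableEq ι] (M : Matrix ι ι 𝕜) :
    (∃ a : 𝕜, M = a • 1) ↔ M = (M.trace / Fintype.card ι) • 1 := by
  refine ⟨?_, fun h => ⟨_, h⟩⟩
  rintro ⟨a, rfl⟩
  rcases isEmpty_or_nonempty ι with _ | _
  · exact Subsingleton.elim _ _
  · have : (Fintype.card ι : 𝕜) ≠ 0 := Nat.cast_ne_zero.2 Fintype.card_ne_zero
    rw [trace_smul, trace_one, smul_eq_mul, mul_div_cancel_right₀ _ this]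

theorem Dx_const {n : ℕ} (f : ℂ → (Fin n → ℂ) → (Fin n → ℂ) → Fin n → ℂ) (c x : ℂ)
    (v w : Fin n → ℂ) :
    Dx f (fun _ _ _ => c) x v w = 0 := by
  simp [Dx, Px, Py, Pyd]

section LinearSystem

variable {n : ℕ} (A B : Matrix (Fin n) (Fin n) ℂ)

def linearSystem : ℂ → (Fin n → ℂ) → (Fin n → ℂ) → Fin n → ℂ :=
  fun _ v w I => (∑ K, A I K * w K) + ∑ K, B I K * v K

theorem Pyd_linearSystem (I J : Fin n) (x : ℂ) (v w : Fin n → ℂ) :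
    Pyd J (fun a b c => linearSystem A B a b c I) x v w = A I J :=
  ((hasDerivAt_sum_mul_update _ w J _).add_const _).deriv

theorem Py_linearSystem (I J : Fin n) (x : ℂ) (v w : Fin n → ℂ) :
    Py J (fun a b c => linearSystem A B a b c I) x v w = B I J :=
  ((hasDerivAt_sum_mul_update _ v J _).const_add _).deriv

theorem phi_linearSystem (I J : Fin n) (x : ℂ) (v w : Fin n → ℂ) :
    phi (linearSystem A B) I J x v w = -(B + (1 / 4 : ℂ) • (A * A)) I J := by
  simp only [phi, Pyd_linearSystem, Py_linearSystem, Dx_const, Matrix.add_apply,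
    Matrix.smul_apply, Matrix.mul_apply, smul_eq_mul]
  ring

theorem fels_linearSystem (I J : Fin n) (x : ℂ) (v w : Fin n → ℂ) :
    fels (linearSystem A B) I J x v w =
      -(B + (1 / 4 : ℂ) • (A * A)
        - ((B + (1 / 4 : ℂ) • (A * A)).trace / n) • (1 : Matrix (Fin n) (Fin n) ℂ)) I J := by
  simp only [fels, phi_linearSystem, Finset.sum_neg_distrib, Matrix.sub_apply, Matrix.smul_apply,
    Matrix.one_apply, Matrix.trace, Matrix.diag, smul_eq_mul]
  ring

end LinearSystem

theorem fels_torsion_linear_system_iff_general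
    (n : ℕ) (A B : Matrix (Fin n) (Fin n) ℂ) :
    (∀ (I J : Fin n) (x : ℂ) (v w : Fin n → ℂ),
        fels (fun _ v w I => (∑ K, A I K * w K) + ∑ K, B I K * v K)
          I J x v w = 0)
      ↔ ∃ a : ℂ, B + (1 / 4 : ℂ) • (A * A)
          = a • (1 : Matrix (Fin n) (Fin n) ℂ) := by
  rw [Matrix.exists_eq_smul_one_iff, Fintype.card_fin, ← sub_eq_zero, ← Matrix.ext_iff]
  change (∀ I J x v w, fels (linearSystem A B) I J x v w = 0) ↔ _
  simp only [fels_linearSystem, neg_eq_zero, Matrix.zero_apply]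
  exact ⟨fun h I J => h I J 0 0 0, fun h I J _ _ _ => h I J⟩

/-- A linear constant-coefficient system y'' = A·y' + B·y has vanishing Fels
torsion iff B + (1/4)A² is a scalar multiple of the identity. -/
theorem fels_torsion_linear_system_iff
    (n : ℕ) (hn : 2 ≤ n) (A B : Matrix (Fin n) (Fin n) ℂ) :
    (∀ (I J : Fin n) (x : ℂ) (v w : Fin n → ℂ),
        fels (fun _ v w I => (∑ K, A I K * w K) + ∑ K, B I K * v K)
          I J x v w = 0)
      ↔ ∃ a : ℂ, B + (1 / 4 : ℂ) • (A * A)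
          = a • (1 : Matrix (Fin n) (Fin n) ℂ) :=
  fels_torsion_linear_system_iff_general n A B
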